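/- Let c, w₁, w₂, ..., wₙ be nonempty reduced words in W(X) with n > 1 such that cw₁ ∈ W(X), each wᵢ is a subword of c or of w₁, and wᵢ₋₁ ≠ wᵢ for all i. Then the left-normed product c w₁ w₂ ⋯ wₙ lies in W(X). -/

import Mathlib

inductive Wd (X : Type) : Type
  | one : Wd X
  | of : X → Wd X
  | mul : Wd X → Wd X → Wd X

namespace Wd

variable {X : Type}

/-- Product of possibly-empty words: the empty word `one` acts as identity;
otherwise the product is the formal (magma) product. -/
def cmul : Wd X → Wd X → Wd X
  | one, v => v
  | u, one => u
  | u, v => mul u v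

/-- Number of letters of a word. -/
def len : Wd X → ℕ
  | one => 0
  | of _ => 1
  | mul u v => len u + len v

/-- The set of subwords of a word. -/
def Sub : Wd X → Set (Wd X)
  | one => {one}
  | of x => {of x}
  | mul u v => insert (mul u v) (Sub u ∪ Sub v)

/-- `v ∈ W(X)`: `v` is an element of `P(X) ∪ {1}` (the empty word occurs only
as the whole word) having no subword of the form `uu` or `(uw)w`. -/
def InW (v : Wd X) : Prop :=
  (∀ w ∈ Sub v, w = one → v = one) ∧
  (∀ u : Wd X, mul u u ∉ Sub v) ∧
  (∀ u w : Wd X, mul (mul u w) w ∉ Sub v)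

/-- Left-normed product of a list of words. -/
def prodL : List (Wd X) → Wd X
  | [] => one
  | a :: l => l.foldl cmul a

/-- The left-normed symmetric word `b₁b₂⋯b_k b_{k-1}⋯b₁` built from `[b₁,…,b_k]`. -/
def symW (l : List (Wd X)) : Wd X := prodL (l ++ l.reverse.tail)

/-- `lpad a l` is the left-normed product `a·l₁⋯lₙ`, with the convention that
`1·l₁⋯lₙ` means `l₁⋯lₙ`. -/
def lpad (a : Wd X) (l : List (Wd X)) : Wd X :=
  match a with
  | one => prodL l
  | _ => prodL (a :: l)

/-- Specification of the reduction map `π : P(X) ∪ {1} → W(X)`. -/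
structure PiSpec (π : Wd X → Wd X) : Prop where
  map_one : π one = one
  map_of : ∀ x : X, π (of x) = of x
  mem_W : ∀ v, InW (π v)
  fix : ∀ v, InW v → π v = v
  cancel_sq : ∀ u, InW u → π (mul u u) = one
  cancel : ∀ a v, InW (mul a v) → π (mul (mul a v) v) = a
  keep : ∀ u v, InW u → InW v → InW (mul u v) → π (mul u v) = mul u v
  red : ∀ u v, π (mul u v) = π (cmul (π u) (π v))

lemma sub_self (v : Wd X) : v ∈ Sub v := by
  cases v <;> simp [Sub]

lemma len_le_of_sub : ∀ {v u : Wd X}, u ∈ Sub v → len u ≤ len v := by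
  intro v
  induction v with
  | one => intro u h; simp [Sub] at h; subst h; simp [len]
  | of x => intro u h; simp [Sub] at h; subst h; simp [len]
  | mul a b iha ihb =>
    intro u h
    simp [Sub] at h
    rcases h with h | h | h
    · subst h; exact le_rfl
    · have := iha h; simp [len]; omega
    · have := ihb h; simp [len]; omega

lemma one_not_sub {v : Wd X} (hv : InW v) (h1 : v ≠ Wd.one) : Wd.one ∉ Sub v :=
  fun h => h1 (hv.1 _ h rfl)

lemma len_pos : ∀ {v : Wd X}, Wd.one ∉ Sub v → 1 ≤ len v := by
  intro v
  induction v with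
  | one => intro h; exact absurd (sub_self _) h
  | of x => intro _; simp [len]
  | mul a b iha ihb =>
    intro h
    simp [Sub] at h
    have := iha h.1
    simp [len]; omega

lemma cmul_eq_mul {u v : Wd X} (hu : u ≠ Wd.one) (hv : v ≠ Wd.one) :
    cmul u v = mul u v := by
  cases u <;> cases v <;> simp_all [cmul]

lemma step {p w q last : Wd X} (hp : InW p) (hw : InW w) (hw1 : w ≠ Wd.one)
    (hpq : p = mul q last) (hlw : last ≠ w) (hlen : len w < len p) :
    InW (mul p w) := by
  have hp1 : p ≠ Wd.one := by subst hpq; exact fun h => by cases h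
  have h1 : Wd.one ∉ Sub p := one_not_sub hp hp1
  have h2 : Wd.one ∉ Sub w := one_not_sub hw hw1
  refine ⟨?_, ?_, ?_⟩
  · intro x hx hx1
    subst hx1
    simp [Sub] at hx
    rcases hx with h | h
    · exact absurd h h1
    · exact absurd h h2
  · intro u hu
    simp [Sub] at hu
    rcases hu with h | h | h
    · obtain ⟨h', h''⟩ := h
      subst h'; subst h''
      omega
    · exact hp.2.1 u h
    · exact hw.2.1 u h
  · intro u v huv
    simp [Sub] at huv
    rcases huv with h | h | h
    · obtain ⟨h', h''⟩ := h
      subst h''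
      rw [hpq] at h'
      obtain ⟨_, h3⟩ := Wd.mul.inj h'.symm
      exact hlw h3
    · exact hp.2.2 u v h
    · exact hw.2.2 u v h

lemma aux {c w1 : Wd X} (hlc : 1 ≤ len c) (hlw1 : 1 ≤ len w1) :
    ∀ (l : List (Wd X)) (p last : Wd X), InW p → len c + len w1 ≤ len p →
    (∃ q, p = mul q last) →
    (∀ w ∈ l, InW w ∧ w ≠ Wd.one ∧ (w ∈ Sub c ∨ w ∈ Sub w1)) →
    List.Chain' (· ≠ ·) (last :: l) →
    InW (List.foldl cmul p l) := by
  intro l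
  induction l with
  | nil => intro p last hp _ _ _ _; exact hp
  | cons w l ih =>
    rintro p last hp hplen ⟨q, hq⟩ hl hchain
    obtain ⟨hwW, hw1, hwsub⟩ := hl w List.mem_cons_self
    have hlw : len w < len p := by
      rcases hwsub with h | h
      · have := len_le_of_sub h; omega
      · have := len_le_of_sub h; omega
    have hlast : last ≠ w := (List.isChain_cons_cons.mp hchain).1
    have hpw : InW (mul p w) := step hp hwW hw1 hq hlast hlw
    have hp1 : p ≠ Wd.one := by subst hq; exact fun h => by cases h
    have hcm : cmul p w = mul p w := cmul_eq_mul hp1 hw1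
    simp only [List.foldl_cons, hcm]
    refine ih (mul p w) w hpw ?_ ⟨p, rfl⟩ (fun x hx => hl x (List.mem_cons_of_mem _ hx)) ?_
    · simp [len]; omega
    · exact (List.isChain_cons_cons.mp hchain).2

end Wd

open Wd in
/-- If `c, w₁, …, wₙ ∈ W(X) ∖ {1}` with `n > 1`, `cw₁ ∈ W(X)`, each `wᵢ` a
subword of `c` or of `w₁`, and `wᵢ₋₁ ≠ wᵢ`, then `cw₁w₂⋯wₙ ∈ W(X)`. -/
theorem prod_mem_W {X : Type} (c : Wd X) (ws : List (Wd X))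
    (hn : 2 ≤ ws.length) (hne : ws ≠ [])
    (hc : InW c) (hc1 : c ≠ Wd.one)
    (hw : ∀ w ∈ ws, InW w ∧ w ≠ Wd.one ∧ (w ∈ Sub c ∨ w ∈ Sub (ws.head hne)))
    (hchain : ws.Chain' (· ≠ ·))
    (hcw : InW (cmul c (ws.head hne))) :
    InW (prodL (c :: ws)) := by
  cases ws with
  | nil => exact absurd rfl hne
  | cons w1 rest =>
    obtain ⟨hw1W, hw11, _⟩ := hw w1 List.mem_cons_self
    have hlc : 1 ≤ len c := len_pos (one_not_sub hc hc1)
    have hlw1 : 1 ≤ len w1 := len_pos (one_not_sub hw1W hw11)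
    have hcm : cmul c w1 = Wd.mul c w1 := cmul_eq_mul hc1 hw11
    have hcwW : InW (Wd.mul c w1) := by rw [← hcm]; exact hcw
    show InW (List.foldl cmul c (w1 :: rest))
    simp only [List.foldl_cons, hcm]
    refine aux hlc hlw1 rest (Wd.mul c w1) w1 hcwW (by simp [len]) ⟨c, rfl⟩
      (fun x hx => hw x (List.mem_cons_of_mem _ hx)) hchain
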